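/- Newman's value for Υ⁴ at π/2: −(1/2) · ∫₀^{π/2} (π/2 − t)² · log(sin t) dt = (π³/48) · log 2 + (π/8) · ζ(3). -/

import Mathlib

/-! For `|r| < 1`, the real part of `-log (1 - r e^{2it})` gives
`-½ log (1 - 2 r cos 2t + r²) = ∑ rⁿ cos (2nt) / n`, and integrating termwise against the weight
`(π/2 - t)²`, with `∫₀^{π/2} (π/2 - t)² cos (2nt) dt = π / (4n²)`, yields `(π/4) ∑ rⁿ / n³`.
Let `r → 1⁻`: since `1 - 2 cos 2t + 1 = (2 sin t)²`, dominated convergence (with a bound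
`log 5 - 2 log (sin t)` on the logarithm) turns the left side into
`-∫ (π/2 - t)² (log 2 + log (sin t)) dt`, and Abel's limit theorem turns the right side into
`(π/4) ζ(3)`. The weight integrates to `π³/24`, which produces the `log 2` term. -/

open Real MeasureTheory Filter Topology

/-- The Riemann zeta value `ζ k = ∑_{m ≥ 1} 1 / m ^ k`. -/
noncomputable def zetaVal (k : ℕ) : ℝ := ∑' m : ℕ+, 1 / (m : ℝ) ^ k

theorem integral_sq_mul_cos_two_mul_nat {n : ℕ} (hn : n ≠ 0) :
    ∫ t in (0:ℝ)..π / 2, (π / 2 - t) ^ 2 * cos (2 * n * t) = π / (4 * n ^ 2) := by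
  have hn₀ : (n : ℝ) ≠ 0 := Nat.cast_ne_zero.mpr hn
  let F : ℝ → ℝ := fun t => (π / 2 - t) ^ 2 * sin (2 * n * t) / (2 * n)
      - (π / 2 - t) * cos (2 * n * t) / (2 * n ^ 2) - sin (2 * n * t) / (4 * n ^ 3)
  have hF : ∀ t, HasDerivAt F ((π / 2 - t) ^ 2 * cos (2 * n * t)) t := by
    intro t
    have hu : HasDerivAt (fun t : ℝ => 2 * n * t) (2 * n) t := by
      simpa using (hasDerivAt_id t).const_mul (2 * (n : ℝ))
    have hs := hu.sin
    have hc := hu.cos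
    have hp : HasDerivAt (fun t : ℝ => π / 2 - t) (-1) t := by
      simpa using (hasDerivAt_id t).const_sub (π / 2)
    refine ((((hp.fun_pow 2).fun_mul hs).div_const (2 * (n : ℝ))).fun_sub
      ((hp.fun_mul hc).div_const (2 * (n : ℝ) ^ 2))).fun_sub
      (hs.div_const (4 * (n : ℝ) ^ 3)) |>.congr_deriv ?_
    field_simp
    ring
  rw [intervalIntegral.integral_eq_sub_of_hasDerivAt (fun t _ => hF t)
    (by apply Continuous.intervalIntegrable; fun_prop)]
  have hsin_end : sin (2 * n * (π / 2)) = 0 := by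
    rw [show 2 * (n : ℝ) * (π / 2) = n * π by ring, sin_nat_mul_pi]
  simp only [F, hsin_end, mul_zero, sin_zero, cos_zero]
  field_simp
  ring

theorem hasSum_pow_mul_cos_div {r : ℝ} (hr : |r| < 1) (θ : ℝ) :
    HasSum (fun n : ℕ => r ^ n * cos (n * θ) / n)
      (-(1 / 2) * log (1 - 2 * r * cos θ + r ^ 2)) := by
  set z : ℂ := r * Complex.exp (θ * Complex.I)
  have hz : ‖z‖ < 1 := by simpa [z, Complex.norm_exp_ofReal_mul_I] using hr
  have hterm : ∀ n : ℕ, (z ^ n / n).re = r ^ n * cos (n * θ) / n := by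
    intro n
    rw [show z ^ n / n = ((r ^ n / n : ℝ) : ℂ) * Complex.exp ((n * θ : ℝ) * Complex.I) by
      simp only [z, mul_pow, ← Complex.exp_nat_mul]; push_cast; ring_nf,
      Complex.re_ofReal_mul, Complex.exp_ofReal_mul_I_re]
    ring
  have hnorm : ‖1 - z‖ ^ 2 = 1 - 2 * r * cos θ + r ^ 2 := by
    rw [Complex.sq_norm, Complex.normSq_apply]
    simp only [z, Complex.sub_re, Complex.sub_im, Complex.one_re, Complex.one_im,
      Complex.re_ofReal_mul, Complex.im_ofReal_mul, Complex.exp_ofReal_mul_I_re,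
      Complex.exp_ofReal_mul_I_im]
    linear_combination r ^ 2 * sin_sq_add_cos_sq θ
  have hsum : (-Complex.log (1 - z)).re = -(1 / 2) * log (1 - 2 * r * cos θ + r ^ 2) := by
    rw [Complex.neg_re, Complex.log_re, ← hnorm, log_pow]
    push_cast
    ring
  simpa only [hterm, hsum] using Complex.hasSum_re (Complex.hasSum_taylorSeries_neg_log hz)

theorem sq_pi_div_two_sub_le {t : ℝ} (ht : t ∈ Set.Icc 0 π) : (π / 2 - t) ^ 2 ≤ (π / 2) ^ 2 :=
  sq_le_sq' (by linarith [ht.2]) (by linarith [ht.1])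

theorem abs_sq_sub_mul_cos_div_le {r t : ℝ} (n : ℕ) (ht : t ∈ Set.Icc 0 π) :
    |(π / 2 - t) ^ 2 * (r ^ n * cos (2 * n * t) / n)| ≤ (π / 2) ^ 2 * |r| ^ n := by
  have hcos : |r ^ n * cos (2 * n * t) / n| ≤ |r| ^ n := by
    rw [abs_div, abs_mul, abs_pow, Nat.abs_cast]
    calc |r| ^ n * |cos (2 * n * t)| / n ≤ |r| ^ n * |cos (2 * n * t)| :=
          div_nat_le_self_of_nonnneg (by positivity) n
      _ ≤ |r| ^ n := mul_le_of_le_one_right (by positivity) (abs_cos_le_one _)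
  rw [abs_mul, abs_of_nonneg (sq_nonneg _)]
  exact mul_le_mul (sq_pi_div_two_sub_le ht) hcos (abs_nonneg _) (by positivity)

theorem integral_sq_mul_log_one_sub_two_mul_cos_add_sq {r : ℝ} (hr : |r| < 1) :
    ∫ t in (0:ℝ)..π / 2, (π / 2 - t) ^ 2 * (-(1 / 2) * log (1 - 2 * r * cos (2 * t) + r ^ 2)) =
      π / 4 * ∑' n : ℕ, r ^ n / n ^ 3 := by
  have hπ := pi_pos
  have hterm : ∀ n : ℕ, ∫ t in (0:ℝ)..π / 2, (π / 2 - t) ^ 2 * (r ^ n * cos (2 * n * t) / n) =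
      π / 4 * (r ^ n / n ^ 3) := by
    intro n
    rcases eq_or_ne n 0 with rfl | hn
    · simp
    · simp_rw [show ∀ t, (π / 2 - t) ^ 2 * (r ^ n * cos (2 * n * t) / n) =
        r ^ n / n * ((π / 2 - t) ^ 2 * cos (2 * n * t)) from fun t => by ring]
      rw [intervalIntegral.integral_const_mul, integral_sq_mul_cos_two_mul_nat hn]
      field_simp
  have H := intervalIntegral.hasSum_integral_of_dominated_convergence
    (μ := volume) (a := 0) (b := π / 2)
    (F := fun (n : ℕ) t => (π / 2 - t) ^ 2 * (r ^ n * cos (2 * n * t) / n))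
    (f := fun t => (π / 2 - t) ^ 2 * (-(1 / 2) * log (1 - 2 * r * cos (2 * t) + r ^ 2)))
    (fun n t => (π / 2) ^ 2 * |r| ^ n)
    (fun n => by apply Continuous.aestronglyMeasurable; fun_prop)
    (fun n => Eventually.of_forall fun t ht => by
      rw [Set.uIoc_of_le (by positivity)] at ht
      exact abs_sq_sub_mul_cos_div_le n ⟨ht.1.le, by linarith [ht.2]⟩)
    (Eventually.of_forall fun t _ => (summable_geometric_of_lt_one (abs_nonneg r) hr).mul_left _)
    intervalIntegrable_const
    (Eventually.of_forall fun t _ => ((hasSum_pow_mul_cos_div hr (2 * t)).congr_fun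
      fun n => by ring_nf).mul_left ((π / 2 - t) ^ 2))
  rw [← (H.congr_fun fun n => (hterm n).symm).tsum_eq, tsum_mul_left]

theorem abs_log_sq_add_le {r s : ℝ} (hr₀ : 0 ≤ r) (hr₁ : r ≤ 1) (hs₀ : 0 < s) (hs₁ : s ≤ 1) :
    |log ((1 - r) ^ 2 + 4 * r * s ^ 2)| ≤ log 5 - 2 * log s := by
  have hlo : s ^ 2 ≤ (1 - r) ^ 2 + 4 * r * s ^ 2 := by
    -- the difference is `(1 - r)² (1 - s²) + s² (r² + 2r)`
    nlinarith [mul_nonneg (sq_nonneg (1 - r)) (by nlinarith : 0 ≤ 1 - s ^ 2),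
      mul_nonneg (sq_nonneg s) (by positivity : 0 ≤ r ^ 2 + 2 * r)]
  have hhi : (1 - r) ^ 2 + 4 * r * s ^ 2 ≤ 5 := by nlinarith
  have h₁ := log_le_log (by positivity) hlo
  have h₂ := log_le_log ((pow_pos hs₀ 2).trans_le hlo) hhi
  rw [log_pow, Nat.cast_ofNat] at h₁
  have : 0 ≤ log 5 := log_nonneg (by norm_num)
  have : log s ≤ 0 := log_nonpos hs₀.le hs₁
  rw [abs_le]
  constructor <;> linarith

theorem one_sub_two_mul_cos_two_mul_add_sq (r t : ℝ) :
    1 - 2 * r * cos (2 * t) + r ^ 2 = (1 - r) ^ 2 + 4 * r * sin t ^ 2 := by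
  linear_combination -2 * r * cos_two_mul' t - 2 * r * cos_sq_add_sin_sq t

theorem tendsto_integral_sq_mul_log_one_sub_two_mul_cos_add_sq :
    Tendsto (fun r => ∫ t in (0:ℝ)..π / 2,
        (π / 2 - t) ^ 2 * (-(1 / 2) * log (1 - 2 * r * cos (2 * t) + r ^ 2)))
      (𝓝[<] 1) (𝓝 (∫ t in (0:ℝ)..π / 2, (π / 2 - t) ^ 2 * -(log 2 + log (sin t)))) := by
  have hπ := pi_pos
  refine intervalIntegral.tendsto_integral_filter_of_dominated_convergence
    (fun t => (π / 2) ^ 2 * (1 / 2 * log 5 - log (sin t)))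
    (Eventually.of_forall fun r => by
      apply Measurable.aestronglyMeasurable
      fun_prop) ?_
    ((intervalIntegrable_const.sub intervalIntegrable_log_sin).const_mul _) ?_
  · filter_upwards [Ico_mem_nhdsLT (show (0:ℝ) < 1 by norm_num)] with r hr
    refine Eventually.of_forall fun t ht => ?_
    rw [Set.uIoc_of_le (by positivity)] at ht
    have hsin : 0 < sin t := sin_pos_of_pos_of_lt_pi ht.1 (by linarith [ht.2])
    have hlog := abs_log_sq_add_le hr.1 hr.2.le hsin (sin_le_one t)
    rw [norm_mul, norm_mul, norm_neg, norm_div, norm_one, Real.norm_ofNat, Real.norm_eq_abs,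
      Real.norm_eq_abs, abs_of_nonneg (sq_nonneg _), one_sub_two_mul_cos_two_mul_add_sq]
    exact mul_le_mul (sq_pi_div_two_sub_le ⟨ht.1.le, by linarith [ht.2]⟩) (by linarith)
      (by positivity) (by positivity)
  · refine Eventually.of_forall fun t ht => ?_
    rw [Set.uIoc_of_le (by positivity)] at ht
    have hsin : 0 < sin t := sin_pos_of_pos_of_lt_pi ht.1 (by linarith [ht.2])
    have hlimit : 1 - 2 * 1 * cos (2 * t) + 1 ^ 2 = (2 * sin t) ^ 2 := by
      rw [one_sub_two_mul_cos_two_mul_add_sq]; ring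
    have hcont : ContinuousAt (fun r => (π / 2 - t) ^ 2 *
        (-(1 / 2) * log (1 - 2 * r * cos (2 * t) + r ^ 2))) 1 :=
      continuousAt_const.mul (continuousAt_const.mul
        ((by fun_prop : Continuous fun r : ℝ => 1 - 2 * r * cos (2 * t) + r ^ 2).continuousAt.log
          (by rw [hlimit]; positivity)))
    convert hcont.tendsto.mono_left nhdsWithin_le_nhds using 2
    rw [hlimit, log_pow, log_mul two_ne_zero hsin.ne']
    push_cast
    ring

theorem tendsto_tsum_pow_div_pow_nhdsLT_one {k : ℕ} (hk : 1 < k) :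
    Tendsto (fun r : ℝ => ∑' n : ℕ, r ^ n / n ^ k) (𝓝[<] 1) (𝓝 (zetaVal k)) := by
  have hζ : HasSum (fun n : ℕ => 1 / (n : ℝ) ^ k) (zetaVal k) := by
    rw [zetaVal, tsum_pnat_eq_tsum_of_eq_zero (f := fun n : ℕ => 1 / (n : ℝ) ^ k)
      (by simp [Nat.ne_zero_of_lt hk])]
    exact (Real.summable_one_div_nat_pow.mpr hk).hasSum
  exact (Real.tendsto_tsum_powerSeries_nhdsWithin_lt hζ.tendsto_sum_nat).congr fun r =>
    tsum_congr fun n => by ring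

theorem integral_sq_mul_neg_log_two_add_log_sin :
    ∫ t in (0:ℝ)..π / 2, (π / 2 - t) ^ 2 * -(log 2 + log (sin t)) =
      -(π ^ 3 / 24 * log 2) - ∫ t in (0:ℝ)..π / 2, (π / 2 - t) ^ 2 * log (sin t) := by
  have hweight : ∫ t in (0:ℝ)..π / 2, (π / 2 - t) ^ 2 = π ^ 3 / 24 := by
    rw [intervalIntegral.integral_comp_sub_left (fun x => x ^ 2), integral_pow]
    ring
  have hint : IntervalIntegrable (fun t => (π / 2 - t) ^ 2 * log (sin t)) volume 0 (π / 2) :=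
    intervalIntegrable_log_sin.continuousOn_mul (by fun_prop)
  simp_rw [mul_neg, mul_add]
  rw [intervalIntegral.integral_neg, intervalIntegral.integral_add
    (by apply Continuous.intervalIntegrable; fun_prop) hint, intervalIntegral.integral_mul_const,
    hweight]
  ring

theorem upsilon_four_at_pi_div_two :
    -(1 / 2) * ∫ t in (0:ℝ)..(π / 2), (π / 2 - t) ^ 2 * Real.log (Real.sin t) =
      π ^ 3 / 48 * Real.log 2 + π / 8 * zetaVal 3 := by
  have habel : Tendsto (fun r => ∫ t in (0:ℝ)..π / 2,
      (π / 2 - t) ^ 2 * (-(1 / 2) * log (1 - 2 * r * cos (2 * t) + r ^ 2)))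
      (𝓝[<] 1) (𝓝 (π / 4 * zetaVal 3)) := by
    refine ((tendsto_tsum_pow_div_pow_nhdsLT_one (by norm_num)).const_mul (π / 4)).congr' ?_
    filter_upwards [Ioo_mem_nhdsLT (show (-1:ℝ) < 1 by norm_num)] with r hr
    exact (integral_sq_mul_log_one_sub_two_mul_cos_add_sq (abs_lt.mpr hr)).symm
  have hval := tendsto_nhds_unique tendsto_integral_sq_mul_log_one_sub_two_mul_cos_add_sq habel
  rw [integral_sq_mul_neg_log_two_add_log_sin] at hval
  linarith
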